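/- Fix η0, x, β ∈ ℝ and σ > 0. Let Y_1, Y_2, … be i.i.d. {0,1}-valued random variables with P(Y_j = 1) = Φ(η0). For each m let g_m(η) = (∏_{j=1}^m f(Y_j|η)) σ^{−1} φ((η − βx)/σ), the non-normalised posterior density of the linear predictor η. Then for every ε > 0, the posterior mass outside an ε-neighbourhood of η0, namely (∫_{|η−η0|>ε} g_m(η) dη) / (∫_ℝ g_m(η) dη), converges in probability to 0 as m → ∞. -/

import Mathlib

open MeasureTheory Filter Real ProbabilityTheory

/-- The standard normal density `φ(s) = exp(−s²/2)/√(2π)`. -/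
noncomputable def stdPhi (s : ℝ) : ℝ := Real.exp (-s ^ 2 / 2) / Real.sqrt (2 * Real.pi)

/-- The standard normal CDF `Φ(t) = ∫_{−∞}^t φ(s) ds`. -/
noncomputable def stdPhiCDF (t : ℝ) : ℝ := ∫ s in Set.Iic t, stdPhi s

/-- The probit Bernoulli density `f(y|η) = Φ(η)^y (1−Φ(η))^{1−y}` for `y ∈ {0,1}`. -/
noncomputable def probitDens (y η : ℝ) : ℝ := if y = 1 then stdPhiCDF η else 1 - stdPhiCDF η

/-- The mixed-model likelihood contribution
`L_m(β,σ;y,x) = ∫ (∏_{j<m} f(y_j|η)) σ⁻¹ φ((η−βx)/σ) dη`. -/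
noncomputable def Lcontrib (m : ℕ) (β σ : ℝ) (y : ℕ → ℝ) (x : ℝ) : ℝ :=
  ∫ η : ℝ, (∏ j ∈ Finset.range m, probitDens (y j) η) * (σ⁻¹ * stdPhi ((η - β * x) / σ))

/-!
With `ȳₘ` the empirical frequency of ones among `Y₀, …, Yₘ₋₁`, the likelihood is
`exp (m * ℓ(ȳₘ, Φ η))` where `ℓ(a, q) = a log q + (1 - a) log (1 - q)` is, for fixed `a`,
unimodal in `q` with its maximum at `q = a`. Since `ℓ` is continuous in `a`, there are `r, κ, γ > 0`
such that whenever `|ȳₘ - Φ η₀| ≤ κ`, `ℓ(ȳₘ, Φ ·)` exceeds on `[η₀ - r, η₀ + r]` its values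
outside `(η₀ - ε, η₀ + ε)` by at least `γ`; the posterior mass outside is then `O(e^{-γ m})`.
By the strong law of large numbers `ȳₘ → Φ η₀` in probability, which gives the claim.
-/

open scoped Topology ENNReal

lemma stdPhi_eq_gaussianPDFReal : stdPhi = gaussianPDFReal 0 1 := by
  funext s
  simp [stdPhi, gaussianPDFReal, div_eq_inv_mul, mul_comm]

lemma stdPhi_pos (s : ℝ) : 0 < stdPhi s := by
  rw [stdPhi_eq_gaussianPDFReal]; exact gaussianPDFReal_pos 0 1 s one_ne_zero

lemma integrable_stdPhi : Integrable stdPhi := by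
  rw [stdPhi_eq_gaussianPDFReal]; exact integrable_gaussianPDFReal 0 1

lemma integral_stdPhi : ∫ s, stdPhi s = 1 := by
  rw [stdPhi_eq_gaussianPDFReal]; exact integral_gaussianPDFReal_eq_one 0 one_ne_zero

lemma continuous_stdPhi : Continuous stdPhi := by
  unfold stdPhi; fun_prop

lemma hasDerivAt_stdPhiCDF (t : ℝ) : HasDerivAt stdPhiCDF (stdPhi t) t := by
  have h : stdPhiCDF = fun u => stdPhiCDF 0 + ∫ s in (0 : ℝ)..u, stdPhi s := by
    funext u
    rw [intervalIntegral.integral_Iic_sub_Iic integrable_stdPhi.integrableOn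
      integrable_stdPhi.integrableOn |>.symm]
    simp [stdPhiCDF]
  rw [h]
  exact (continuous_stdPhi.integral_hasStrictDerivAt 0 t).hasDerivAt.const_add _

lemma continuous_stdPhiCDF : Continuous stdPhiCDF :=
  continuous_iff_continuousAt.2 fun t => (hasDerivAt_stdPhiCDF t).continuousAt

lemma stdPhiCDF_strictMono : StrictMono stdPhiCDF :=
  strictMono_of_hasDerivAt_pos hasDerivAt_stdPhiCDF stdPhi_pos

lemma stdPhiCDF_pos (t : ℝ) : 0 < stdPhiCDF t :=
  (setIntegral_nonneg measurableSet_Iic fun s _ => (stdPhi_pos s).le).trans_lt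
    (stdPhiCDF_strictMono (sub_one_lt t))

lemma stdPhiCDF_lt_one (t : ℝ) : stdPhiCDF t < 1 :=
  (stdPhiCDF_strictMono (lt_add_one t)).trans_le <| integral_stdPhi ▸
    setIntegral_le_integral integrable_stdPhi (Eventually.of_forall fun s => (stdPhi_pos s).le)

/-- `m * bernLogLik a q` is the log-likelihood of the success probability `q` given `m` Bernoulli
trials with success frequency `a`. -/
noncomputable def bernLogLik (a q : ℝ) : ℝ := a * log q + (1 - a) * log (1 - q)

lemma hasDerivAt_bernLogLik (a : ℝ) {q : ℝ} (hq₀ : q ≠ 0) (hq₁ : q ≠ 1) :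
    HasDerivAt (bernLogLik a) ((a - q) / (q * (1 - q))) q := by
  have hq₁' : 1 - q ≠ 0 := sub_ne_zero.2 (Ne.symm hq₁)
  have h : HasDerivAt (bernLogLik a) (a * q⁻¹ + (1 - a) * (-1 / (1 - q))) q := by
    have h₁ : HasDerivAt (fun q => 1 - q) (-1) q := by simpa using (hasDerivAt_id q).const_sub 1
    exact ((hasDerivAt_log hq₀).const_mul a).add ((h₁.log hq₁').const_mul (1 - a))
  convert h using 1
  field_simp
  ring

lemma continuousOn_bernLogLik (a : ℝ) : ContinuousOn (bernLogLik a) (Set.Ioo 0 1) :=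
  fun _ hq => (hasDerivAt_bernLogLik a hq.1.ne' hq.2.ne).continuousAt.continuousWithinAt

lemma bernLogLik_strictMonoOn {a : ℝ} (ha : a < 1) :
    StrictMonoOn (bernLogLik a) (Set.Ioc 0 a) := by
  refine strictMonoOn_of_deriv_pos (convex_Ioc 0 a)
    ((continuousOn_bernLogLik a).mono fun q hq => ⟨hq.1, hq.2.trans_lt ha⟩) fun q hq => ?_
  rw [interior_Ioc] at hq
  rw [(hasDerivAt_bernLogLik a hq.1.ne' (hq.2.trans ha).ne).deriv]
  exact div_pos (sub_pos.2 hq.2) (mul_pos hq.1 (sub_pos.2 (hq.2.trans ha)))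

lemma bernLogLik_strictAntiOn {a : ℝ} (ha : 0 < a) :
    StrictAntiOn (bernLogLik a) (Set.Ico a 1) := by
  refine strictAntiOn_of_deriv_neg (convex_Ico a 1)
    ((continuousOn_bernLogLik a).mono fun q hq => ⟨ha.trans_le hq.1, hq.2⟩) fun q hq => ?_
  rw [interior_Ico] at hq
  rw [(hasDerivAt_bernLogLik a (ha.trans hq.1).ne' hq.2.ne).deriv]
  exact div_neg_of_neg_of_pos (sub_neg.2 hq.1) (mul_pos (ha.trans hq.1) (sub_pos.2 hq.2))

lemma bernLogLik_le_max {a q q₁ q₂ : ℝ} (hq₁ : 0 < q₁) (hq₂ : q₂ < 1) (ha : a ∈ Set.Icc q₁ q₂)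
    (hq : q ∈ Set.Ioo 0 1) (hout : q ≤ q₁ ∨ q₂ ≤ q) :
    bernLogLik a q ≤ max (bernLogLik a q₁) (bernLogLik a q₂) := by
  rcases hout with h | h
  · exact le_max_of_le_left <| (bernLogLik_strictMonoOn (ha.2.trans_lt hq₂)).monotoneOn
      ⟨hq.1, h.trans ha.1⟩ ⟨hq₁, ha.1⟩ h
  · exact le_max_of_le_right <| (bernLogLik_strictAntiOn (hq₁.trans_le ha.1)).antitoneOn
      ⟨ha.2, hq₂⟩ ⟨ha.2.trans h, hq.2⟩ h

lemma min_le_bernLogLik {a q q₁ q₂ : ℝ} (hq₁ : 0 < q₁) (hq₂ : q₂ < 1) (ha : a ∈ Set.Ioo 0 1)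
    (hq : q ∈ Set.Icc q₁ q₂) :
    min (bernLogLik a q₁) (bernLogLik a q₂) ≤ bernLogLik a q := by
  rcases le_total q a with h | h
  · exact min_le_of_left_le <| (bernLogLik_strictMonoOn ha.2).monotoneOn
      ⟨hq₁, hq.1.trans h⟩ ⟨hq₁.trans_le hq.1, h⟩ hq.1
  · exact min_le_of_right_le <| (bernLogLik_strictAntiOn ha.1).antitoneOn
      ⟨h, hq.2.trans_lt hq₂⟩ ⟨h.trans hq.2, hq₂⟩ hq.2

lemma bernLogLik_lt_self {a q : ℝ} (ha : a ∈ Set.Ioo 0 1) (hq : q ∈ Set.Ioo 0 1) (hqa : q ≠ a) :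
    bernLogLik a q < bernLogLik a a := by
  rcases hqa.lt_or_gt with h | h
  · exact bernLogLik_strictMonoOn ha.2 ⟨hq.1, h.le⟩ ⟨ha.1, le_rfl⟩ h
  · exact bernLogLik_strictAntiOn ha.1 ⟨le_rfl, ha.2⟩ ⟨h.le, hq.2⟩ h

lemma bernLogLik_nonpos {a q : ℝ} (ha : a ∈ Set.Icc 0 1) (hq : q ∈ Set.Ioo 0 1) :
    bernLogLik a q ≤ 0 := by
  have h₁ : log q ≤ 0 := log_nonpos hq.1.le hq.2.le
  have h₂ : log (1 - q) ≤ 0 := log_nonpos (by linarith [hq.2]) (by linarith [hq.1])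
  unfold bernLogLik
  nlinarith [ha.1, ha.2]

lemma exists_gap_bernLogLik {p q₁ q₂ r₁ r₂ : ℝ}
    (h : max (bernLogLik p q₁) (bernLogLik p q₂) < min (bernLogLik p r₁) (bernLogLik p r₂)) :
    ∃ γ > 0, ∀ᶠ a in 𝓝 p,
      max (bernLogLik a q₁) (bernLogLik a q₂) + γ < min (bernLogLik a r₁) (bernLogLik a r₂) := by
  refine ⟨(min (bernLogLik p r₁) (bernLogLik p r₂) - max (bernLogLik p q₁) (bernLogLik p q₂)) / 2,
    by linarith, ?_⟩
  have hcont : Continuous fun a =>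
      min (bernLogLik a r₁) (bernLogLik a r₂) - max (bernLogLik a q₁) (bernLogLik a q₂) := by
    unfold bernLogLik; fun_prop
  filter_upwards [hcont.continuousAt.eventually (eventually_gt_nhds (half_lt_self (sub_pos.2 h)))]
    with a ha
  linarith

lemma setIntegral_mul_div_integral_mul_le {α : Type*} [MeasurableSpace α] {μ : Measure α}
    {f w : α → ℝ} {A B : Set α} {U L : ℝ} (hA : MeasurableSet A) (hB : MeasurableSet B)
    (hf : ∀ x, 0 ≤ f x) (hw : ∀ x, 0 ≤ w x) (hwi : Integrable w μ)
    (hfwi : Integrable (fun x => f x * w x) μ) (hU : 0 ≤ U) (hfU : ∀ x ∈ A, f x ≤ U)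
    (hL : 0 < L) (hfL : ∀ x ∈ B, L ≤ f x) (hwB : 0 < ∫ x in B, w x ∂μ) :
    (∫ x in A, f x * w x ∂μ) / ∫ x, f x * w x ∂μ ≤
      U / L * ((∫ x, w x ∂μ) / ∫ x in B, w x ∂μ) := by
  have hnum : ∫ x in A, f x * w x ∂μ ≤ U * ∫ x, w x ∂μ :=
    calc ∫ x in A, f x * w x ∂μ ≤ ∫ x in A, U * w x ∂μ :=
          setIntegral_mono_on hfwi.integrableOn (hwi.const_mul U).integrableOn hA
            fun x hx => mul_le_mul_of_nonneg_right (hfU x hx) (hw x)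
      _ = U * ∫ x in A, w x ∂μ := integral_const_mul U _
      _ ≤ U * ∫ x, w x ∂μ := mul_le_mul_of_nonneg_left
          (setIntegral_le_integral hwi (Eventually.of_forall hw)) hU
  have hden : L * ∫ x in B, w x ∂μ ≤ ∫ x, f x * w x ∂μ :=
    calc L * ∫ x in B, w x ∂μ = ∫ x in B, L * w x ∂μ := (integral_const_mul L _).symm
      _ ≤ ∫ x in B, f x * w x ∂μ :=
          setIntegral_mono_on (hwi.const_mul L).integrableOn hfwi.integrableOn hB
            fun x hx => mul_le_mul_of_nonneg_right (hfL x hx) (hw x)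
      _ ≤ ∫ x, f x * w x ∂μ :=
          setIntegral_le_integral hfwi (Eventually.of_forall fun x => mul_nonneg (hf x) (hw x))
  rw [div_mul_div_comm]
  exact div_le_div₀ (mul_nonneg hU (integral_nonneg hw)) hnum (mul_pos hL hwB) hden

section Link

variable {F : ℝ → ℝ} (hFc : Continuous F) (hFm : StrictMono F) (hF : ∀ η, F η ∈ Set.Ioo 0 1)
include hFc hFm hF

lemma exists_bernLogLik_max_lt_min (η₀ : ℝ) {ε : ℝ} (hε : 0 < ε) :
    ∃ r, 0 < r ∧ r ≤ ε ∧
      max (bernLogLik (F η₀) (F (η₀ - ε))) (bernLogLik (F η₀) (F (η₀ + ε))) <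
        min (bernLogLik (F η₀) (F (η₀ - r))) (bernLogLik (F η₀) (F (η₀ + r))) := by
  set p := F η₀
  have hmax : max (bernLogLik p (F (η₀ - ε))) (bernLogLik p (F (η₀ + ε))) < bernLogLik p p :=
    max_lt (bernLogLik_lt_self (hF η₀) (hF _) (hFm (by linarith)).ne)
      (bernLogLik_lt_self (hF η₀) (hF _) (hFm (by linarith)).ne')
  have hℓ : ContinuousAt (bernLogLik p) p :=
    (hasDerivAt_bernLogLik p (hF η₀).1.ne' (hF η₀).2.ne).continuousAt
  have hlim : Tendsto (fun r => min (bernLogLik p (F (η₀ - r))) (bernLogLik p (F (η₀ + r))))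
      (𝓝 0) (𝓝 (bernLogLik p p)) := by
    have hleft : Tendsto (fun r => F (η₀ - r)) (𝓝 0) (𝓝 p) :=
      (hFc.comp (continuous_sub_left η₀)).tendsto' 0 p (by simp [p])
    have hright : Tendsto (fun r => F (η₀ + r)) (𝓝 0) (𝓝 p) :=
      (hFc.comp (continuous_const_add η₀)).tendsto' 0 p (by simp [p])
    simpa using (hℓ.tendsto.comp hleft).min (hℓ.tendsto.comp hright)
  have hnear : ∀ᶠ r in 𝓝[>] (0 : ℝ), _ ∧ r ≤ ε :=
    nhdsWithin_le_nhds ((hlim.eventually (eventually_gt_nhds hmax)).and (eventually_le_nhds hε))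
  obtain ⟨r, ⟨hr_lt, hr_le⟩, hr_pos⟩ := (hnear.and self_mem_nhdsWithin).exists
  exact ⟨r, hr_pos, hr_le, hr_lt⟩

theorem exists_setIntegral_div_integral_le_geometric {w : ℝ → ℝ} (hw : ∀ η, 0 < w η)
    (hwi : Integrable w) (η₀ : ℝ) {ε : ℝ} (hε : 0 < ε) :
    ∃ κ > 0, ∃ c ∈ Set.Ico (0 : ℝ) 1, ∃ C, ∀ (m : ℕ) (a : ℝ), |a - F η₀| ≤ κ →
      (∫ η in {η | ε < |η - η₀|}, exp (m * bernLogLik a (F η)) * w η) /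
          ∫ η, exp (m * bernLogLik a (F η)) * w η ≤ C * c ^ m := by
  obtain ⟨r, hr, hrε, hsep⟩ := exists_bernLogLik_max_lt_min hFc hFm hF η₀ hε
  obtain ⟨γ, hγ, hgap⟩ := exists_gap_bernLogLik hsep
  obtain ⟨κ, hκ, hball⟩ := Metric.nhds_basis_closedBall.eventually_iff.1
    (hgap.and (Ioo_mem_nhds (hFm (by linarith : η₀ - ε < η₀)) (hFm (by linarith : η₀ < η₀ + ε))))
  have hwB : 0 < ∫ η in Set.Icc (η₀ - r) (η₀ + r), w η := by
    rw [integral_Icc_eq_integral_Ioc, ← intervalIntegral.integral_of_le (by linarith)]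
    exact intervalIntegral.intervalIntegral_pos_of_pos_on hwi.intervalIntegrable
      (fun η _ => hw η) (by linarith)
  refine ⟨κ, hκ, exp (-γ), ⟨(exp_pos _).le, exp_lt_one_iff.2 (neg_lt_zero.2 hγ)⟩,
    (∫ η, w η) / ∫ η in Set.Icc (η₀ - r) (η₀ + r), w η, fun m a ha => ?_⟩
  obtain ⟨hgap_a, ha_mem⟩ := hball (by rwa [Metric.mem_closedBall, Real.dist_eq])
  have ha01 : a ∈ Set.Ioo 0 1 := ⟨(hF _).1.trans ha_mem.1, ha_mem.2.trans (hF _).2⟩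
  have hm : (0 : ℝ) ≤ m := m.cast_nonneg
  have hmeas : Measurable fun η => exp (m * bernLogLik a (F η)) := by
    unfold bernLogLik; fun_prop
  refine (setIntegral_mul_div_integral_mul_le
    (U := exp (m * max (bernLogLik a (F (η₀ - ε))) (bernLogLik a (F (η₀ + ε)))))
    (L := exp (m * min (bernLogLik a (F (η₀ - r))) (bernLogLik a (F (η₀ + r)))))
    (measurableSet_lt measurable_const (by fun_prop)) measurableSet_Icc
    (fun η => (exp_pos _).le) (fun η => (hw η).le) hwi ?_ (exp_pos _).le (fun η hη => ?_)
    (exp_pos _) (fun η hη => ?_) hwB).trans ?_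
  · refine hwi.mono' (hmeas.aestronglyMeasurable.mul hwi.aestronglyMeasurable)
      (Eventually.of_forall fun η => ?_)
    rw [norm_mul, Real.norm_of_nonneg (exp_pos _).le, Real.norm_of_nonneg (hw η).le]
    refine mul_le_of_le_one_left (hw η).le (exp_le_one_iff.2 ?_)
    exact mul_nonpos_of_nonneg_of_nonpos hm (bernLogLik_nonpos ⟨ha01.1.le, ha01.2.le⟩ (hF η))
  · refine exp_le_exp.2 (mul_le_mul_of_nonneg_left (bernLogLik_le_max (hF _).1 (hF _).2
      ⟨ha_mem.1.le, ha_mem.2.le⟩ (hF η) ?_) hm)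
    rcases lt_abs.1 (Set.mem_ofPred.1 hη) with h | h
    · exact Or.inr (hFm.monotone (by linarith))
    · exact Or.inl (hFm.monotone (by linarith))
  · exact exp_le_exp.2 (mul_le_mul_of_nonneg_left (min_le_bernLogLik (hF _).1 (hF _).2 ha01
      ⟨hFm.monotone hη.1, hFm.monotone hη.2⟩) hm)
  · rw [← exp_sub, ← mul_sub, mul_comm, ← exp_nat_mul]
    refine mul_le_mul_of_nonneg_left (exp_le_exp.2 (mul_le_mul_of_nonneg_left ?_ hm))
      (div_nonneg (integral_nonneg fun η => (hw η).le) hwB.le)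
    linarith

end Link

section Bernoulli

variable {Ω : Type*} [MeasurableSpace Ω]

lemma map_eq_of_forall_eq_zero_or_eq_one (μ : Measure Ω) {X : Ω → ℝ} (hX : Measurable X)
    (h01 : ∀ ω, X ω = 0 ∨ X ω = 1) :
    μ.map X = μ {ω | X ω = 1} • Measure.dirac 1 + μ {ω | X ω = 1}ᶜ • Measure.dirac 0 := by
  ext s hs
  have h₁ : X ⁻¹' s ∩ X ⁻¹' {1} = {ω | X ω = 1} ∩ {_ω | (1 : ℝ) ∈ s} := by
    ext ω; rcases h01 ω with h | h <;> simp [h]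
  have h₀ : X ⁻¹' s \ X ⁻¹' {1} = {ω | X ω = 1}ᶜ ∩ {_ω | (0 : ℝ) ∈ s} := by
    ext ω; rcases h01 ω with h | h <;> simp [h]
  rw [Measure.map_apply hX hs, ← measure_inter_add_sdiff (X ⁻¹' s) (hX (measurableSet_singleton 1)),
    h₁, h₀]
  by_cases h1 : (1 : ℝ) ∈ s <;> by_cases h0 : (0 : ℝ) ∈ s <;> simp [h0, h1, Measure.dirac_apply' _ hs]

lemma identDistrib_of_forall_eq_zero_or_eq_one {Ω' : Type*} [MeasurableSpace Ω'] {μ : Measure Ω}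
    {ν : Measure Ω'} [IsProbabilityMeasure μ] [IsProbabilityMeasure ν] {X : Ω → ℝ} {X' : Ω' → ℝ}
    (hX : Measurable X) (hX' : Measurable X') (h01 : ∀ ω, X ω = 0 ∨ X ω = 1)
    (h01' : ∀ ω, X' ω = 0 ∨ X' ω = 1) (h : μ {ω | X ω = 1} = ν {ω | X' ω = 1}) :
    IdentDistrib X X' μ ν where
  aemeasurable_fst := hX.aemeasurable
  aemeasurable_snd := hX'.aemeasurable
  map_eq := by
    rw [map_eq_of_forall_eq_zero_or_eq_one μ hX h01, map_eq_of_forall_eq_zero_or_eq_one ν hX' h01',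
      prob_compl_eq_one_sub (measurableSet_eq_fun hX measurable_const),
      prob_compl_eq_one_sub (measurableSet_eq_fun hX' measurable_const), h]

lemma integral_eq_of_forall_eq_zero_or_eq_one (μ : Measure Ω) {X : Ω → ℝ} (hX : Measurable X)
    (h01 : ∀ ω, X ω = 0 ∨ X ω = 1) : ∫ ω, X ω ∂μ = μ.real {ω | X ω = 1} :=
  calc ∫ ω, X ω ∂μ = ∫ ω, {ω | X ω = 1}.indicator 1 ω ∂μ :=
        integral_congr_ae (Eventually.of_forall fun ω => by rcases h01 ω with h | h <;> simp [h])
    _ = μ.real {ω | X ω = 1} := integral_indicator_one (hX (measurableSet_singleton 1))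

theorem tendstoInMeasure_bernoulli_mean {μ : Measure Ω} [IsProbabilityMeasure μ]
    {Y : ℕ → Ω → ℝ} (hY : ∀ j, Measurable (Y j)) (hindep : Pairwise fun i j => IndepFun (Y i) (Y j) μ)
    (h01 : ∀ j ω, Y j ω = 0 ∨ Y j ω = 1) {p : ℝ≥0∞} (hp : ∀ j, μ {ω | Y j ω = 1} = p) :
    TendstoInMeasure μ (fun (m : ℕ) ω => (∑ j ∈ Finset.range m, Y j ω) / m) atTop
      (fun _ => p.toReal) := by
  have hident (j : ℕ) : IdentDistrib (Y j) (Y 0) μ μ :=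
    identDistrib_of_forall_eq_zero_or_eq_one (hY j) (hY 0) (h01 j) (h01 0) ((hp j).trans (hp 0).symm)
  have hint : Integrable (Y 0) μ := Integrable.of_bound (hY 0).aestronglyMeasurable 1
    (Eventually.of_forall fun ω => by rcases h01 0 ω with h | h <;> simp [h])
  have hmean : μ[Y 0] = p.toReal := by
    rw [integral_eq_of_forall_eq_zero_or_eq_one μ (hY 0) (h01 0), measureReal_def, hp 0]
  refine tendstoInMeasure_of_tendsto_ae (fun m => by fun_prop) ?_
  simpa [hmean] using strong_law_ae_real Y hint hindep hident

end Bernoulli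

lemma prod_probitDens_eq_exp {y : ℕ → ℝ} (h01 : ∀ j, y j = 0 ∨ y j = 1) {m : ℕ} (hm : m ≠ 0)
    (η : ℝ) :
    ∏ j ∈ Finset.range m, probitDens (y j) η =
      exp (m * bernLogLik ((∑ j ∈ Finset.range m, y j) / m) (stdPhiCDF η)) := by
  have hΦ₀ := stdPhiCDF_pos η
  have hΦ₁ : 0 < 1 - stdPhiCDF η := sub_pos.2 (stdPhiCDF_lt_one η)
  have hfactor (j : ℕ) : probitDens (y j) η = exp (bernLogLik (y j) (stdPhiCDF η)) := by
    rcases h01 j with h | h <;> simp [probitDens, bernLogLik, h, exp_log, hΦ₀, hΦ₁]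
  rw [Finset.prod_congr rfl fun j _ => hfactor j, ← exp_sum]
  congr 1
  simp only [bernLogLik, Finset.sum_add_distrib, ← Finset.sum_mul, Finset.sum_sub_distrib,
    Finset.sum_const, Finset.card_range, nsmul_eq_mul, mul_one]
  field_simp

/-- Posterior concentration: the non-normalised posterior mass outside any ε-neighbourhood of
the true linear predictor η0 converges in probability to 0. -/
theorem stmt3 {Ω : Type*} [MeasurableSpace Ω] (P : Measure Ω) [IsProbabilityMeasure P]
    (η0 x β σ : ℝ) (hσ : 0 < σ)
    (Y : ℕ → Ω → ℝ) (hmeas : ∀ j, Measurable (Y j))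
    (hindep : iIndepFun Y P)
    (hval : ∀ j ω, Y j ω = 0 ∨ Y j ω = 1)
    (hdist : ∀ j, P {ω | Y j ω = 1} = ENNReal.ofReal (stdPhiCDF η0)) :
    ∀ ε > 0, ∀ δ > 0,
      Tendsto
        (fun m => P {ω |
          δ < |(∫ η in {η : ℝ | ε < |η - η0|},
                  (∏ j ∈ Finset.range m, probitDens (Y j ω) η) * (σ⁻¹ * stdPhi ((η - β * x) / σ)))
               / (∫ η : ℝ,
                  (∏ j ∈ Finset.range m, probitDens (Y j ω) η) * (σ⁻¹ * stdPhi ((η - β * x) / σ)))|})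
        atTop (nhds 0) := by
  intro ε hε δ hδ
  have hprior_pos (η : ℝ) : 0 < σ⁻¹ * stdPhi ((η - β * x) / σ) :=
    mul_pos (inv_pos.2 hσ) (stdPhi_pos _)
  have hprior_int : Integrable fun η => σ⁻¹ * stdPhi ((η - β * x) / σ) :=
    ((integrable_stdPhi.comp_div hσ.ne').comp_sub_right (β * x)).const_mul σ⁻¹
  obtain ⟨κ, hκ, c, hc, C, hbound⟩ := exists_setIntegral_div_integral_le_geometric
    continuous_stdPhiCDF stdPhiCDF_strictMono (fun η => ⟨stdPhiCDF_pos η, stdPhiCDF_lt_one η⟩)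
    hprior_pos hprior_int η0 hε
  have hLLN := tendstoInMeasure_bernoulli_mean hmeas (fun i j hij => hindep.indepFun hij) hval hdist
  rw [ENNReal.toReal_ofReal (stdPhiCDF_pos η0).le] at hLLN
  have hrate : ∀ᶠ m : ℕ in atTop, C * c ^ m < δ :=
    (by simpa using (tendsto_pow_atTop_nhds_zero_of_lt_one hc.1 hc.2).const_mul C :
      Tendsto (fun m : ℕ => C * c ^ m) atTop (𝓝 0)).eventually (eventually_lt_nhds hδ)
  refine tendsto_of_tendsto_of_tendsto_of_le_of_le' tendsto_const_nhds
    (tendstoInMeasure_iff_dist.1 hLLN κ hκ) (Eventually.of_forall fun _ => zero_le) ?_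
  filter_upwards [hrate, eventually_ne_atTop 0] with m hm hm0
  refine measure_mono fun ω hω => ?_
  by_contra hfar
  simp only [Set.mem_ofPred_eq, prod_probitDens_eq_exp (hval · ω) hm0] at hω hfar
  rw [abs_of_nonneg (div_nonneg (integral_nonneg fun η => (mul_pos (exp_pos _) (hprior_pos η)).le)
    (integral_nonneg fun η => (mul_pos (exp_pos _) (hprior_pos η)).le))] at hω
  exact lt_asymm hm (hω.trans_le (hbound m _ (not_le.1 hfar).le))
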